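/- Let Γ = (V,E) be a finite simple graph with maximal vertex degree D > 0 and let k ∈ {1,…,|V|}. Then the function p ↦ λ_k(p) is locally Lipschitz continuous on [1, +∞), where λ_k(p) is the k-th minimax eigenvalue of the up 0-Laplacian L^{up}_{0,p} of Γ. -/
import Mathlib


open scoped BigOperators

/-- The `p`-Rayleigh quotient of the up `0`-Laplacian of a graph:
`(Σ_{e∈E} |(δ₀f)(e)|^p) / (Σ_{v∈V} |f(v)|^p)`. -/
noncomputable def rayleighP {V : Type*} [Fintype V] [DecidableEq V] (G : SimpleGraph V)
    [DecidableRel G.Adj] (p : ℝ) (f : V → ℝ) : ℝ :=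
  (∑ e ∈ G.edgeFinset,
      Sym2.lift ⟨fun u v => |f u - f v| ^ p, fun u v => by simp only []; rw [abs_sub_comm]⟩ e) /
    ∑ v, |f v| ^ p

/-- The Krasnoselskii genus of a set `S ⊆ ℝ^V`: the least `k ≥ 1` such that there is an odd
continuous map `S → ℝ^k ∖ {0}`. -/
noncomputable def genus {V : Type*} [Fintype V] (S : Set (V → ℝ)) : ℕ :=
  sInf {k : ℕ | 0 < k ∧ ∃ φ : (V → ℝ) → Fin k → ℝ,
    ContinuousOn φ S ∧ (∀ x ∈ S, φ (-x) = -φ x) ∧ ∀ x ∈ S, φ x ≠ 0}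

/-- The `k`-th minimax eigenvalue `λ_k(p)` of the up `0`-Laplacian `L^{up}_{0,p}`:
the infimum over all symmetric compact subsets `S ⊆ ℝ^V ∖ {0}` of Krasnoselskii genus `≥ k`
of the supremum of the `p`-Rayleigh quotient over `S`. -/
noncomputable def minimaxEig {V : Type*} [Fintype V] [DecidableEq V] (G : SimpleGraph V)
    [DecidableRel G.Adj] (k : ℕ) (p : ℝ) : ℝ :=
  sInf { r : ℝ | ∃ S : Set (V → ℝ), IsCompact S ∧ (∀ x ∈ S, x ≠ 0) ∧ (∀ x ∈ S, -x ∈ S) ∧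
    k ≤ genus S ∧ r = sSup (rayleighP G p '' S) }

/-! ### Auxiliary lemmas -/

set_option linter.unusedSectionVars false in
/-- `t ↦ a^t` is `2^b`-Lipschitz on `[1,b]` for `a ∈ [0,2]`. -/
private lemma rpow_lip {b : ℝ} (hb : 1 ≤ b) {a : ℝ} (ha0 : 0 ≤ a) (ha2 : a ≤ 2)
    {p q : ℝ} (hp : p ∈ Set.Icc 1 b) (hq : q ∈ Set.Icc 1 b) :
    |a ^ p - a ^ q| ≤ 2 ^ b * |p - q| := by
  have h2b : (0:ℝ) < 2 ^ b := Real.rpow_pos_of_pos two_pos b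
  have hp1 := hp.1
  have hq1 := hq.1
  rcases eq_or_lt_of_le ha0 with h0 | h0
  · rw [← h0, Real.zero_rpow (by positivity : p ≠ 0),
      Real.zero_rpow (by positivity : q ≠ 0)]
    simp only [sub_self, abs_zero]
    positivity
  · have hderiv : ∀ t ∈ Set.Icc (1:ℝ) b,
        HasDerivWithinAt (fun t => a ^ t) (a ^ t * Real.log a) (Set.Icc 1 b) t :=
      fun t _ => (Real.hasStrictDerivAt_const_rpow h0 t).hasDerivAt.hasDerivWithinAt
    have hbound : ∀ t ∈ Set.Icc (1:ℝ) b, ‖a ^ t * Real.log a‖ ≤ 2 ^ b := by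
      intro t ht
      rw [Real.norm_eq_abs, abs_mul, abs_of_pos (Real.rpow_pos_of_pos h0 t)]
      rcases le_total a 1 with ha1 | ha1
      · have h1 : a ^ t ≤ a := by
          calc a ^ t ≤ a ^ (1:ℝ) := Real.rpow_le_rpow_of_exponent_ge h0 ha1 ht.1
          _ = a := Real.rpow_one a
        have h2 : |Real.log a| = Real.log a⁻¹ := by
          rw [Real.log_inv, abs_of_nonpos (Real.log_nonpos ha0 ha1)]
        have h3 : Real.log a⁻¹ ≤ a⁻¹ - 1 :=
          Real.log_le_sub_one_of_pos (by positivity)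
        have h4 : a ^ t * |Real.log a| ≤ a * (a⁻¹ - 1) :=
          mul_le_mul h1 (by rw [h2]; exact h3) (abs_nonneg _) (le_of_lt h0)
        have h5 : a * (a⁻¹ - 1) ≤ 1 := by
          rw [mul_sub, mul_inv_cancel₀ (ne_of_gt h0)]; nlinarith
        have h6 : (1:ℝ) ≤ 2 ^ b := by
          calc (1:ℝ) = 2 ^ (0:ℝ) := (Real.rpow_zero 2).symm
          _ ≤ 2 ^ b := Real.rpow_le_rpow_of_exponent_le one_le_two (by linarith)
        linarith
      · have h1 : a ^ t ≤ 2 ^ b := by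
          calc a ^ t ≤ 2 ^ t := Real.rpow_le_rpow ha0 ha2 (by linarith [ht.1])
          _ ≤ 2 ^ b := Real.rpow_le_rpow_of_exponent_le one_le_two ht.2
        have h2 : |Real.log a| ≤ 1 := by
          rw [abs_of_nonneg (Real.log_nonneg ha1)]
          calc Real.log a ≤ a - 1 := Real.log_le_sub_one_of_pos h0
          _ ≤ 1 := by linarith
        calc a ^ t * |Real.log a| ≤ 2 ^ b * 1 :=
          mul_le_mul h1 h2 (abs_nonneg _) (le_of_lt h2b)
        _ = 2 ^ b := mul_one _
    have := (convex_Icc (1:ℝ) b).norm_image_sub_le_of_norm_hasDerivWithin_le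
      hderiv hbound hq hp
    simpa [Real.norm_eq_abs] using this

private lemma quot_est {n1 n2 d1 d2 B C C' : ℝ} (hd1 : 1 ≤ d1) (hd2 : 1 ≤ d2) (hn2 : 0 ≤ n2)
    (hn2B : n2 ≤ B) (hn : |n1 - n2| ≤ C) (hd : |d1 - d2| ≤ C') :
    |n1 / d1 - n2 / d2| ≤ C + B * C' := by
  have hd10 : (0:ℝ) < d1 := by linarith
  have hd20 : (0:ℝ) < d2 := by linarith
  have key : n1 / d1 - n2 / d2 = (n1 - n2) / d1 + n2 * (d2 - d1) / (d1 * d2) := by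
    field_simp
    ring
  rw [key]
  calc |(n1 - n2) / d1 + n2 * (d2 - d1) / (d1 * d2)|
      ≤ |(n1 - n2) / d1| + |n2 * (d2 - d1) / (d1 * d2)| := abs_add_le _ _
  _ ≤ C + B * C' := by
      have h1 : |(n1 - n2) / d1| ≤ C := by
        rw [abs_div, abs_of_pos hd10]
        calc |n1 - n2| / d1 ≤ |n1 - n2| := div_le_self (abs_nonneg _) hd1
        _ ≤ C := hn
      have h2 : |n2 * (d2 - d1) / (d1 * d2)| ≤ B * C' := by
        rw [abs_div, abs_mul, abs_of_pos (mul_pos hd10 hd20), abs_of_nonneg hn2]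
        calc n2 * |d2 - d1| / (d1 * d2) ≤ n2 * |d2 - d1| :=
            div_le_self (mul_nonneg hn2 (abs_nonneg _)) (by nlinarith : (1:ℝ) ≤ d1 * d2)
        _ ≤ B * C' := by
            rw [abs_sub_comm]
            exact mul_le_mul hn2B hd (abs_nonneg _) (by linarith)
      linarith

section Aux

set_option linter.unusedSectionVars false

variable {V : Type*} [Fintype V] [DecidableEq V] (G : SimpleGraph V) [DecidableRel G.Adj]

/-- The summand of the numerator of the Rayleigh quotient. -/
private noncomputable def eterm (p : ℝ) (f : V → ℝ) : Sym2 V → ℝ :=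
  Sym2.lift ⟨fun u v => |f u - f v| ^ p, fun u v => by simp only []; rw [abs_sub_comm]⟩

private noncomputable def rNum (p : ℝ) (f : V → ℝ) : ℝ := ∑ e ∈ G.edgeFinset, eterm p f e

private noncomputable def rDen (p : ℝ) (f : V → ℝ) : ℝ := ∑ v, |f v| ^ p

private lemma rayleighP_eq (p : ℝ) (f : V → ℝ) : rayleighP G p f = rNum G p f / rDen p f := rfl

private lemma eterm_nonneg (p : ℝ) (f : V → ℝ) (e : Sym2 V) : 0 ≤ eterm p f e := by
  induction e using Sym2.ind with
  | _ u v => exact Real.rpow_nonneg (abs_nonneg _) p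

private lemma eterm_le (p : ℝ) (hp : 0 ≤ p) (f : V → ℝ) (hf : ∀ v, |f v| ≤ 1) (e : Sym2 V) :
    eterm p f e ≤ 2 ^ p := by
  induction e using Sym2.ind with
  | _ u v =>
    have h2 : |f u - f v| ≤ 2 := by
      calc |f u - f v| ≤ |f u| + |f v| := abs_sub _ _
      _ ≤ 2 := by linarith [hf u, hf v]
    exact Real.rpow_le_rpow (abs_nonneg _) h2 hp

private lemma eterm_lip {b : ℝ} (hb : 1 ≤ b) {p q : ℝ} (hp : p ∈ Set.Icc 1 b)
    (hq : q ∈ Set.Icc 1 b) (f : V → ℝ) (hf : ∀ v, |f v| ≤ 1) (e : Sym2 V) :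
    |eterm p f e - eterm q f e| ≤ 2 ^ b * |p - q| := by
  induction e using Sym2.ind with
  | _ u v =>
    have h2 : |f u - f v| ≤ 2 := by
      calc |f u - f v| ≤ |f u| + |f v| := abs_sub _ _
      _ ≤ 2 := by linarith [hf u, hf v]
    exact rpow_lip hb (abs_nonneg _) h2 hp hq

private lemma rNum_nonneg (p : ℝ) (f : V → ℝ) : 0 ≤ rNum G p f :=
  Finset.sum_nonneg fun e _ => eterm_nonneg p f e

private lemma rDen_nonneg (p : ℝ) (f : V → ℝ) : 0 ≤ rDen p f :=
  Finset.sum_nonneg fun v _ => Real.rpow_nonneg (abs_nonneg _) p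

private lemma rayleighP_nonneg (p : ℝ) (f : V → ℝ) : 0 ≤ rayleighP G p f :=
  div_nonneg (rNum_nonneg G p f) (rDen_nonneg p f)

private lemma rNum_le {b : ℝ} {p : ℝ} (hp : p ∈ Set.Icc 1 b) (f : V → ℝ)
    (hf : ∀ v, |f v| ≤ 1) :
    rNum G p f ≤ (G.edgeFinset.card : ℝ) * 2 ^ b := by
  calc rNum G p f ≤ ∑ _e ∈ G.edgeFinset, (2:ℝ) ^ b := by
        refine Finset.sum_le_sum fun e _ => ?_
        calc eterm p f e ≤ 2 ^ p := eterm_le p (by linarith [hp.1]) f hf e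
        _ ≤ 2 ^ b := Real.rpow_le_rpow_of_exponent_le one_le_two hp.2
  _ = (G.edgeFinset.card : ℝ) * 2 ^ b := by rw [Finset.sum_const, nsmul_eq_mul]

private lemma rNum_lip {b : ℝ} (hb : 1 ≤ b) {p q : ℝ} (hp : p ∈ Set.Icc 1 b)
    (hq : q ∈ Set.Icc 1 b) (f : V → ℝ) (hf : ∀ v, |f v| ≤ 1) :
    |rNum G p f - rNum G q f| ≤ (G.edgeFinset.card : ℝ) * (2 ^ b * |p - q|) := by
  rw [rNum, rNum, ← Finset.sum_sub_distrib]
  calc |∑ e ∈ G.edgeFinset, (eterm p f e - eterm q f e)|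
      ≤ ∑ e ∈ G.edgeFinset, |eterm p f e - eterm q f e| := Finset.abs_sum_le_sum_abs _ _
  _ ≤ ∑ _e ∈ G.edgeFinset, 2 ^ b * |p - q| :=
      Finset.sum_le_sum fun e _ => eterm_lip hb hp hq f hf e
  _ = (G.edgeFinset.card : ℝ) * (2 ^ b * |p - q|) := by rw [Finset.sum_const, nsmul_eq_mul]

private lemma rDen_one_le {p : ℝ} (hp : 1 ≤ p) (f : V → ℝ) (hf : ∀ v, |f v| ≤ 1)
    (hex : ∃ v, |f v| = 1) : 1 ≤ rDen p f := by
  obtain ⟨v₀, hv₀⟩ := hex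
  calc (1:ℝ) = |f v₀| ^ p := by rw [hv₀, Real.one_rpow]
  _ ≤ ∑ v, |f v| ^ p := Finset.single_le_sum
      (fun v _ => Real.rpow_nonneg (abs_nonneg _) p) (Finset.mem_univ v₀)

private lemma rDen_lip {b : ℝ} (hb : 1 ≤ b) {p q : ℝ} (hp : p ∈ Set.Icc 1 b)
    (hq : q ∈ Set.Icc 1 b) (f : V → ℝ) (hf : ∀ v, |f v| ≤ 1) :
    |rDen p f - rDen q f| ≤ (Fintype.card V : ℝ) * (2 ^ b * |p - q|) := by
  rw [rDen, rDen, ← Finset.sum_sub_distrib]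
  calc |∑ v, (|f v| ^ p - |f v| ^ q)| ≤ ∑ v, abs (|f v| ^ p - |f v| ^ q) :=
      Finset.abs_sum_le_sum_abs _ _
  _ ≤ ∑ _v : V, 2 ^ b * |p - q| := Finset.sum_le_sum fun v _ =>
      rpow_lip hb (abs_nonneg _) (by linarith [hf v]) hp hq
  _ = (Fintype.card V : ℝ) * (2 ^ b * |p - q|) := by
      rw [Finset.sum_const, nsmul_eq_mul, Finset.card_univ]

/-- The Lipschitz constant. -/
private noncomputable def lipC (b : ℝ) : ℝ :=
  (G.edgeFinset.card : ℝ) * 2 ^ b * (1 + (Fintype.card V : ℝ) * 2 ^ b)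

private lemma lipC_nonneg (b : ℝ) : 0 ≤ lipC G b := by
  unfold lipC
  have h2b : (0:ℝ) < 2 ^ b := Real.rpow_pos_of_pos two_pos b
  positivity

/-- Pointwise Lipschitz estimate for normalized functions. -/
private lemma rayleigh_lip {b : ℝ} (hb : 1 ≤ b) {p q : ℝ} (hp : p ∈ Set.Icc 1 b)
    (hq : q ∈ Set.Icc 1 b) (f : V → ℝ) (hf : ∀ v, |f v| ≤ 1) (hex : ∃ v, |f v| = 1) :
    |rayleighP G p f - rayleighP G q f| ≤ lipC G b * |p - q| := by
  rw [rayleighP_eq, rayleighP_eq]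
  have := quot_est (rDen_one_le hp.1 f hf hex) (rDen_one_le hq.1 f hf hex)
    (rNum_nonneg G q f) (rNum_le G hq f hf) (rNum_lip G hb hp hq f hf) (rDen_lip hb hp hq f hf)
  calc |rNum G p f / rDen p f - rNum G q f / rDen q f|
      ≤ (G.edgeFinset.card : ℝ) * (2 ^ b * |p - q|) +
        (G.edgeFinset.card : ℝ) * 2 ^ b * ((Fintype.card V : ℝ) * (2 ^ b * |p - q|)) := this
  _ = lipC G b * |p - q| := by rw [lipC]; ring

private lemma eterm_smul (p : ℝ) (c : ℝ) (hc : 0 ≤ c) (f : V → ℝ) (e : Sym2 V) :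
    eterm p (fun v => f v / c) e = eterm p f e / c ^ p := by
  induction e using Sym2.ind with
  | _ u v =>
    show |f u / c - f v / c| ^ p = |f u - f v| ^ p / c ^ p
    rw [div_sub_div_same, abs_div, abs_of_nonneg hc,
      Real.div_rpow (abs_nonneg _) hc]

private lemma exists_normalize [Nonempty V] (f : V → ℝ) (hf : f ≠ 0) :
    ∃ g : V → ℝ, (∀ v, |g v| ≤ 1) ∧ (∃ v, |g v| = 1) ∧
      ∀ p : ℝ, rayleighP G p f = rayleighP G p g := by
  set M : ℝ := Finset.univ.sup' Finset.univ_nonempty fun v => |f v| with hM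
  obtain ⟨v₁, hv₁⟩ : ∃ v, f v ≠ 0 := Function.ne_iff.mp hf
  have hMpos : 0 < M := lt_of_lt_of_le (abs_pos.mpr hv₁)
    (Finset.le_sup' (fun v => |f v|) (Finset.mem_univ v₁))
  refine ⟨fun v => f v / M, ?_, ?_, ?_⟩
  · intro v
    rw [abs_div, abs_of_pos hMpos, div_le_one hMpos]
    exact Finset.le_sup' (fun v => |f v|) (Finset.mem_univ v)
  · obtain ⟨v₀, _, hv₀⟩ := Finset.exists_mem_eq_sup' Finset.univ_nonempty fun v => |f v|
    exact ⟨v₀, by rw [abs_div, abs_of_pos hMpos, ← hv₀, div_self (ne_of_gt hMpos)]⟩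
  · intro p
    have hcp : (0:ℝ) < M ^ p := Real.rpow_pos_of_pos hMpos p
    rw [rayleighP_eq, rayleighP_eq]
    have hnum : rNum G p (fun v => f v / M) = rNum G p f / M ^ p := by
      rw [rNum, rNum, Finset.sum_div]
      exact Finset.sum_congr rfl fun e _ => eterm_smul p M hMpos.le f e
    have hden : rDen p (fun v => f v / M) = rDen p f / M ^ p := by
      rw [rDen, rDen, Finset.sum_div]
      refine Finset.sum_congr rfl fun v _ => ?_
      rw [abs_div, abs_of_pos hMpos, Real.div_rpow (abs_nonneg _) hMpos.le]
    rw [hnum, hden, div_div_div_comm, div_self (ne_of_gt hcp), div_one]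

private lemma rayleigh_le [Nonempty V] {b p : ℝ} (hp : p ∈ Set.Icc 1 b) (f : V → ℝ)
    (hf : f ≠ 0) : rayleighP G p f ≤ (G.edgeFinset.card : ℝ) * 2 ^ b := by
  obtain ⟨g, hg1, hg2, hfg⟩ := exists_normalize G f hf
  rw [hfg p, rayleighP_eq]
  calc rNum G p g / rDen p g ≤ rNum G p g :=
      div_le_self (rNum_nonneg G p g) (rDen_one_le hp.1 g hg1 hg2)
  _ ≤ _ := rNum_le G hp g hg1

private lemma rayleigh_lip_all [Nonempty V] {b p q : ℝ} (hb : 1 ≤ b) (hp : p ∈ Set.Icc 1 b)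
    (hq : q ∈ Set.Icc 1 b) (f : V → ℝ) (hf : f ≠ 0) :
    |rayleighP G p f - rayleighP G q f| ≤ lipC G b * |p - q| := by
  obtain ⟨g, hg1, hg2, hfg⟩ := exists_normalize G f hf
  rw [hfg p, hfg q]
  exact rayleigh_lip G hb hp hq g hg1 hg2

private lemma sSup_img_nonneg (p : ℝ) (S : Set (V → ℝ)) :
    0 ≤ sSup (rayleighP G p '' S) := by
  rcases S.eq_empty_or_nonempty with rfl | ⟨x, hx⟩
  · simp [Real.sSup_empty]
  by_cases hbdd : BddAbove (rayleighP G p '' S)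
  · exact le_trans (rayleighP_nonneg G p x) (le_csSup hbdd ⟨x, hx, rfl⟩)
  · rw [Real.sSup_of_not_bddAbove hbdd]

private lemma sSup_lip [Nonempty V] {b p q : ℝ} (hb : 1 ≤ b) (hp : p ∈ Set.Icc 1 b)
    (hq : q ∈ Set.Icc 1 b) {S : Set (V → ℝ)} (hS : ∀ x ∈ S, x ≠ 0) :
    |sSup (rayleighP G p '' S) - sSup (rayleighP G q '' S)| ≤ lipC G b * |p - q| := by
  have hC : 0 ≤ lipC G b * |p - q| := mul_nonneg (lipC_nonneg G b) (abs_nonneg _)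
  rcases S.eq_empty_or_nonempty with rfl | hSne
  · simpa [Real.sSup_empty] using hC
  have hbp : BddAbove (rayleighP G p '' S) :=
    ⟨(G.edgeFinset.card : ℝ) * 2 ^ b, by
      rintro r ⟨x, hx, rfl⟩; exact rayleigh_le G hp x (hS x hx)⟩
  have hbq : BddAbove (rayleighP G q '' S) :=
    ⟨(G.edgeFinset.card : ℝ) * 2 ^ b, by
      rintro r ⟨x, hx, rfl⟩; exact rayleigh_le G hq x (hS x hx)⟩
  have hptw : ∀ x ∈ S, |rayleighP G p x - rayleighP G q x| ≤ lipC G b * |p - q| :=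
    fun x hx => rayleigh_lip_all G hb hp hq x (hS x hx)
  rw [abs_sub_le_iff]
  constructor
  · rw [sub_le_iff_le_add]
    refine csSup_le (hSne.image _) ?_
    rintro r ⟨x, hx, rfl⟩
    have h1 := (abs_sub_le_iff.mp (hptw x hx)).1
    have h2 := le_csSup hbq (Set.mem_image_of_mem _ hx)
    linarith
  · rw [sub_le_iff_le_add]
    refine csSup_le (hSne.image _) ?_
    rintro r ⟨x, hx, rfl⟩
    have h1 := (abs_sub_le_iff.mp (hptw x hx)).2
    have h2 := le_csSup hbp (Set.mem_image_of_mem _ hx)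
    linarith

/-- The set occurring in `minimaxEig`. -/
private def eigSet (k : ℕ) (q : ℝ) : Set ℝ :=
  { r : ℝ | ∃ S : Set (V → ℝ), IsCompact S ∧ (∀ x ∈ S, x ≠ 0) ∧ (∀ x ∈ S, -x ∈ S) ∧
    k ≤ genus S ∧ r = sSup (rayleighP G q '' S) }

private lemma minimaxEig_eq (k : ℕ) (q : ℝ) : minimaxEig G k q = sInf (eigSet G k q) := rfl

private lemma minimax_lip [Nonempty V] {b q1 q2 : ℝ} (hb : 1 ≤ b) (h1 : q1 ∈ Set.Icc 1 b)
    (h2 : q2 ∈ Set.Icc 1 b) (k : ℕ) :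
    |minimaxEig G k q1 - minimaxEig G k q2| ≤ lipC G b * |q1 - q2| := by
  have hC : 0 ≤ lipC G b * |q1 - q2| := mul_nonneg (lipC_nonneg G b) (abs_nonneg _)
  rw [minimaxEig_eq, minimaxEig_eq]
  by_cases hex : ∃ S : Set (V → ℝ), IsCompact S ∧ (∀ x ∈ S, x ≠ 0) ∧ (∀ x ∈ S, -x ∈ S) ∧
      k ≤ genus S
  · have hne : ∀ q : ℝ, (eigSet G k q).Nonempty := by
      intro q
      obtain ⟨S, hS1, hS2, hS3, hS4⟩ := hex
      exact ⟨_, S, hS1, hS2, hS3, hS4, rfl⟩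
    have hbdd : ∀ q : ℝ, BddBelow (eigSet G k q) := by
      intro q
      refine ⟨0, ?_⟩
      rintro r ⟨S, _, _, _, _, rfl⟩
      exact sSup_img_nonneg G q S
    have key : ∀ (p' q' : ℝ), p' ∈ Set.Icc 1 b → q' ∈ Set.Icc 1 b →
        sInf (eigSet G k p') - lipC G b * |p' - q'| ≤ sInf (eigSet G k q') := by
      intro p' q' hp' hq'
      refine le_csInf (hne q') ?_
      rintro r ⟨S, hS1, hS2, hS3, hS4, rfl⟩
      have hA : sInf (eigSet G k p') ≤ sSup (rayleighP G p' '' S) :=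
        csInf_le (hbdd p') ⟨S, hS1, hS2, hS3, hS4, rfl⟩
      have hB := (abs_sub_le_iff.mp (sSup_lip G hb hp' hq' hS2)).1
      linarith
    have k1 := key q1 q2 h1 h2
    have k2 := key q2 q1 h2 h1
    rw [abs_sub_comm q2 q1] at k2
    rw [abs_sub_le_iff]
    constructor <;> linarith
  · have hempty : ∀ q : ℝ, eigSet G k q = (∅ : Set ℝ) := by
      intro q
      ext r
      simp only [Set.mem_empty_iff_false, iff_false]
      rintro ⟨S, hS1, hS2, hS3, hS4, _⟩
      exact hex ⟨S, hS1, hS2, hS3, hS4⟩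
    rw [hempty, hempty, Real.sInf_empty, sub_self, abs_zero]
    exact hC

end Aux

/-- Local Lipschitz continuity of `p ↦ λ_k(p)` on `[1,∞)`. -/
theorem stmt5 {V : Type*} [Fintype V] [DecidableEq V] [Nonempty V]
    (G : SimpleGraph V) [DecidableRel G.Adj]
    (hD : 0 < Finset.univ.sup (fun v => G.degree v))
    (k : ℕ) (hk1 : 1 ≤ k) (hk2 : k ≤ Fintype.card V) :
    ∀ p ∈ Set.Ici (1 : ℝ), ∃ (K : NNReal) (U : Set ℝ),
      U ∈ nhdsWithin p (Set.Ici (1 : ℝ)) ∧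
        LipschitzOnWith K (fun q : ℝ => minimaxEig G k q) U := by
  intro p hp
  simp only [Set.mem_Ici] at hp
  have hb : (1:ℝ) ≤ p + 1 := by linarith
  have hK0 : 0 ≤ lipC G (p + 1) := lipC_nonneg G (p + 1)
  refine ⟨(lipC G (p + 1)).toNNReal, Set.Ici 1 ∩ Set.Ioo (p - 1) (p + 1), ?_, ?_⟩
  · exact Filter.inter_mem self_mem_nhdsWithin
      (mem_nhdsWithin_of_mem_nhds (Ioo_mem_nhds (by linarith) (by linarith)))
  · apply LipschitzOnWith.of_dist_le_mul
    intro q1 hq1 q2 hq2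
    rw [Real.dist_eq, Real.dist_eq, Real.coe_toNNReal _ hK0]
    have hq1' : q1 ∈ Set.Icc 1 (p + 1) := ⟨hq1.1, le_of_lt hq1.2.2⟩
    have hq2' : q2 ∈ Set.Icc 1 (p + 1) := ⟨hq2.1, le_of_lt hq2.2.2⟩
    exact minimax_lip G hb hq1' hq2' k
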